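/- Let m be a positive integer and p ∈ [0,1). Let P : {m, m+1, …} → ℝ satisfy P(m) = 2/(2+m+mp) and, for every integer k > m, the recurrence P(k) = ((2mp + (1-p)(k-1)) / (2 + 2mp + (1-p)k)) · P(k-1). Then for every k ≥ m, P(k) = (2/(2+m+mp)) · ξ(k)/ξ(m), where ξ(k) = Γ(k + 2mp/(1-p)) / Γ(k + 1 + 2(mp+1)/(1-p)) and Γ is Euler's Gamma function. -/
import Mathlib


/-- `ξ(k) = Γ(k + 2mp/(1-p)) / Γ(k + 1 + 2(mp+1)/(1-p))`. -/
noncomputable def xiPAAPA (m : ℕ) (p : ℝ) (k : ℕ) : ℝ :=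
  Real.Gamma ((k : ℝ) + 2 * (m : ℝ) * p / (1 - p))
    / Real.Gamma ((k : ℝ) + 1 + 2 * ((m : ℝ) * p + 1) / (1 - p))

lemma xiPAAPA_step (m : ℕ) (p : ℝ) (hp0 : 0 ≤ p) (hp1 : p < 1) (k : ℕ) (hk : 1 ≤ k) :
    xiPAAPA m p (k + 1) =
      (((k : ℝ) + 2 * (m : ℝ) * p / (1 - p)) /
        ((k : ℝ) + 1 + 2 * ((m : ℝ) * p + 1) / (1 - p))) * xiPAAPA m p k := by
  have h1p : (0:ℝ) < 1 - p := by linarith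
  set a : ℝ := 2 * (m : ℝ) * p / (1 - p) with ha
  set b : ℝ := 2 * ((m : ℝ) * p + 1) / (1 - p) with hb
  have ha0 : 0 ≤ a := by positivity
  have hb0 : 0 < b := by positivity
  have hx : (0:ℝ) < (k : ℝ) + a := by
    have : (1:ℝ) ≤ (k : ℝ) := by exact_mod_cast hk
    linarith
  have hy : (0:ℝ) < (k : ℝ) + 1 + b := by
    have : (0:ℝ) ≤ (k : ℝ) := Nat.cast_nonneg k
    linarith
  have e1 : ((k + 1 : ℕ) : ℝ) + a = ((k : ℝ) + a) + 1 := by push_cast; ring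
  have e2 : ((k + 1 : ℕ) : ℝ) + 1 + b = ((k : ℝ) + 1 + b) + 1 := by push_cast; ring
  unfold xiPAAPA
  rw [e1, e2, Real.Gamma_add_one (ne_of_gt hx), Real.Gamma_add_one (ne_of_gt hy),
    div_mul_div_comm]

/-- Closed-form solution of the degree-distribution recurrence of the PA-APA model for
`p ∈ [0,1)` (Theorem 2.1 of the paper). -/
theorem pa_apa_degree_distribution_closed_form (m : ℕ) (hm : 1 ≤ m)
    (p : ℝ) (hp0 : 0 ≤ p) (hp1 : p < 1) (P : ℕ → ℝ)
    (hPm : P m = 2 / (2 + (m : ℝ) + (m : ℝ) * p))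
    (hrec : ∀ k, m < k →
      P k = ((2 * (m : ℝ) * p + (1 - p) * ((k : ℝ) - 1))
        / (2 + 2 * (m : ℝ) * p + (1 - p) * (k : ℝ))) * P (k - 1)) :
    ∀ k, m ≤ k →
      P k = (2 / (2 + (m : ℝ) + (m : ℝ) * p)) * xiPAAPA m p k / xiPAAPA m p m := by
  have h1p : (0:ℝ) < 1 - p := by linarith
  have hm1 : (1:ℝ) ≤ (m : ℝ) := by exact_mod_cast hm
  have hxi : xiPAAPA m p m ≠ 0 := by
    unfold xiPAAPA
    have h1 : (0:ℝ) < (m : ℝ) + 2 * (m : ℝ) * p / (1 - p) := by positivity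
    have h2 : (0:ℝ) < (m : ℝ) + 1 + 2 * ((m : ℝ) * p + 1) / (1 - p) := by positivity
    exact ne_of_gt (div_pos (Real.Gamma_pos_of_pos h1) (Real.Gamma_pos_of_pos h2))
  intro k hk
  induction k, hk using Nat.le_induction with
  | base =>
    rw [hPm, mul_div_assoc, div_self hxi, mul_one]
  | succ k hk ih =>
    have hrec' := hrec (k + 1) (by omega)
    simp only [Nat.add_sub_cancel] at hrec'
    have hkR : (1:ℝ) ≤ (k : ℝ) := by
      have : (1:ℝ) ≤ (m:ℝ) := hm1
      have : (m:ℝ) ≤ (k:ℝ) := by exact_mod_cast hk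
      linarith
    have hcoef : (2 * (m : ℝ) * p + (1 - p) * (((k + 1 : ℕ) : ℝ) - 1))
        / (2 + 2 * (m : ℝ) * p + (1 - p) * ((k + 1 : ℕ) : ℝ))
        = ((k : ℝ) + 2 * (m : ℝ) * p / (1 - p)) /
          ((k : ℝ) + 1 + 2 * ((m : ℝ) * p + 1) / (1 - p)) := by
      have hd1 : (2 : ℝ) + 2 * (m : ℝ) * p + (1 - p) * ((k + 1 : ℕ) : ℝ) ≠ 0 := by
        push_cast
        have : (0:ℝ) ≤ (k:ℝ) := by linarith
        nlinarith
      have hd2 : (k : ℝ) + 1 + 2 * ((m : ℝ) * p + 1) / (1 - p) ≠ 0 := by positivity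
      rw [div_eq_div_iff hd1 hd2]
      push_cast
      field_simp
      ring
    rw [hrec', hcoef, ih, xiPAAPA_step m p hp0 hp1 k (le_trans hm hk)]
    ring
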